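/- arXiv:0801.4851 — 5 statements merged into one kernel-verified Lean document; each statement's English description precedes it below -/
import Mathlib

section
/- In any max game, if a greedy move by some player takes a routing p to a new routing p', then M(p') < M(p) in the total order on routing vectors. -/
open Finset

/-- A routing game: a finite set of players `Fin N`, a graph `G` on the finite
vertex type `V`, and for each player a nonempty finite strategy set of paths
(trails of length at least 1) joining its source to its destination. -/
structure RoutingGame (V : Type) [Fintype V] [DecidableEq V] where
  /-- the underlying graph -/
  G : SimpleGraph V
  /-- the number of players -/
  N : ℕ
  Npos : 0 < N
  /-- the source of each player -/
  src : Fin N → V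
  /-- the destination of each player -/
  dst : Fin N → V
  src_ne_dst : ∀ i, src i ≠ dst i
  /-- the strategy set of each player -/
  strat : ∀ i : Fin N, Finset (G.Walk (src i) (dst i))
  strat_nonempty : ∀ i, (strat i).Nonempty
  strat_trail : ∀ i, ∀ q ∈ strat i, q.IsTrail
  strat_len : ∀ i, ∀ q ∈ strat i, 1 ≤ q.length

namespace RoutingGame

variable {V : Type} [Fintype V] [DecidableEq V] (R : RoutingGame V)

/-- A routing assigns to each player a walk from its source to its destination. -/
abbrev Routing := ∀ i : Fin R.N, R.G.Walk (R.src i) (R.dst i)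

/-- `p` is a valid routing if every player's path belongs to its strategy set. -/
def IsRouting (p : R.Routing) : Prop := ∀ i, p i ∈ R.strat i

/-- The edge congestion `C_e(p)`: the number of players whose path uses `e`. -/
def edgeCong (p : R.Routing) (e : Sym2 V) : ℕ :=
  (Finset.univ.filter fun i => e ∈ (p i).edges).card

/-- The path congestion `C_i(p)` of player `i`. -/
def pathCong (p : R.Routing) (i : Fin R.N) : ℕ :=
  (p i).edges.toFinset.sup (R.edgeCong p)

/-- The network congestion `C(p)`. -/
def netCong (p : R.Routing) : ℕ :=
  Finset.univ.sup (R.edgeCong p)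

/-- The maximum path length `D(p)`. -/
def maxLen (p : R.Routing) : ℕ :=
  Finset.univ.sup fun i => (p i).length

/-- The longest path length `L` over all strategy sets. -/
def Lmax : ℕ :=
  Finset.univ.sup fun i : Fin R.N => (R.strat i).sup fun q => q.length

/-- Player cost in the max game: `pc_i(p) = max (C_i(p)) (D_i(p))`. -/
def pcMax (p : R.Routing) (i : Fin R.N) : ℕ :=
  max (R.pathCong p i) (p i).length

/-- Social cost in the max game: `SC(p) = max (C(p)) (D(p))`. -/
def SCMax (p : R.Routing) : ℕ := max (R.netCong p) (R.maxLen p)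

/-- A Nash-routing of the max game: a routing in which every player is locally
optimal. -/
def NashMax (p : R.Routing) : Prop :=
  R.IsRouting p ∧
    ∀ i, ∀ q ∈ R.strat i, R.pcMax p i ≤ R.pcMax (Function.update p i q) i

/-- A greedy move in the max game takes `p` to `p'` by letting a single player
switch to a strictly cheaper path in its strategy set. -/
def GreedyMoveMax (p p' : R.Routing) : Prop :=
  ∃ i, ∃ q ∈ R.strat i,
    p' = Function.update p i q ∧ R.pcMax p' i < R.pcMax p i

/-- The entry `m_k(p)` of the routing vector of the max game: the number of
players with path congestion `k` plus the number of players with path length `k`. -/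
def mvecMax (p : R.Routing) (k : ℕ) : ℕ :=
  (Finset.univ.filter fun i => R.pathCong p i = k).card +
    (Finset.univ.filter fun i => (p i).length = k).card

/-- The strict order on routing vectors (max game): `M(p') < M(p)` iff the
vectors agree above some index `j` and the entry of `p'` at `j` is smaller. -/
def MLtMax (p' p : R.Routing) : Prop :=
  ∃ j : ℕ, (∀ k, j < k → R.mvecMax p' k = R.mvecMax p k) ∧
    R.mvecMax p' j < R.mvecMax p j

end RoutingGame

/-! Only player `i` changes its path, and its cost drops below `c = pc_i(p)`. Another player's
congestion can rise only on edges of the new path of `i`, hence only up to `C_i(p') < c`, and can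
fall only on edges of the old path of `i`, hence only from a value `≤ c`. So the players at every
level `k > c` are the same before and after the move, while at level `c` nobody arrives and
player `i` leaves in the congestion count or in the length count. -/

section Levels

variable {ι : Type*} [Fintype ι] {f f' : ι → ℕ} {i : ι}
  (hf' : ∀ j, f' j ≤ max (f j) (f' i)) (hf : ∀ j, f j ≤ max (f' j) (f i))
include hf' hf

theorem filter_eq_subset_of_le_max {k : ℕ} (hk : f i ≤ k) (hk' : f' i < k) :
    univ.filter (f' · = k) ⊆ univ.filter (f · = k) := by
  intro j
  simp only [mem_filter, mem_univ, true_and]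
  have := hf' j
  have := hf j
  omega

theorem card_filter_eq_eq_of_lt {k : ℕ} (hk : f i < k) (hk' : f' i < k) :
    #(univ.filter (f' · = k)) = #(univ.filter (f · = k)) :=
  le_antisymm (card_le_card (filter_eq_subset_of_le_max hf' hf hk.le hk'))
    (card_le_card (filter_eq_subset_of_le_max hf hf' hk'.le hk))

theorem card_filter_eq_le {k : ℕ} (hk : f i ≤ k) (hk' : f' i < k) :
    #(univ.filter (f' · = k)) ≤ #(univ.filter (f · = k)) :=
  card_le_card (filter_eq_subset_of_le_max hf' hf hk hk')

theorem card_filter_eq_lt {k : ℕ} (hk : f i = k) (hk' : f' i < k) :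
    #(univ.filter (f' · = k)) < #(univ.filter (f · = k)) := by
  refine card_lt_card ⟨filter_eq_subset_of_le_max hf' hf hk.le hk', fun hsub => ?_⟩
  have hi : i ∈ univ.filter (f' · = k) := hsub (by simpa using hk)
  simp only [mem_filter, mem_univ, true_and] at hi
  omega

end Levels

theorem le_max_of_eq_of_ne {ι : Type*} {f f' : ι → ℕ} {i : ι} (h : ∀ j, j ≠ i → f' j = f j)
    (j : ι) : f' j ≤ max (f j) (f' i) := by
  by_cases hj : j = i
  · subst hj; exact le_max_right _ _
  · exact (h j hj).le.trans (le_max_left _ _)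

namespace RoutingGame

variable {V : Type} [Fintype V] [DecidableEq V]

section GreedyMove

variable {R : RoutingGame V} {p p' : R.Routing} {i : Fin R.N}

theorem edgeCong_le_of_notMem (h : ∀ j, j ≠ i → p' j = p j) {e : Sym2 V}
    (he : e ∉ (p' i).edges) : R.edgeCong p' e ≤ R.edgeCong p e := by
  refine card_le_card fun j hj => ?_
  simp only [mem_filter, mem_univ, true_and] at hj ⊢
  have hji : j ≠ i := by rintro rfl; exact he hj
  rwa [← h j hji]

theorem pathCong_le_max (h : ∀ j, j ≠ i → p' j = p j) (j : Fin R.N) :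
    R.pathCong p' j ≤ max (R.pathCong p j) (R.pathCong p' i) := by
  refine Finset.sup_le fun e he => ?_
  rw [List.mem_toFinset] at he
  by_cases hei : e ∈ (p' i).edges
  · exact le_max_of_le_right (le_sup (List.mem_toFinset.mpr hei))
  · have hji : j ≠ i := by rintro rfl; exact hei he
    have hpe : e ∈ (p j).edges := h j hji ▸ he
    exact le_max_of_le_left
      ((edgeCong_le_of_notMem h hei).trans (le_sup (List.mem_toFinset.mpr hpe)))

theorem length_le_max (h : ∀ j, j ≠ i → p' j = p j) (j : Fin R.N) :
    (p' j).length ≤ max (p j).length (p' i).length :=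
  le_max_of_eq_of_ne (f := fun j => (p j).length) (f' := fun j => (p' j).length)
    (fun j hj => by rw [h j hj]) j

variable (h : ∀ j, j ≠ i → p' j = p j) (hlt : R.pcMax p' i < R.pcMax p i)
include h hlt

theorem mvecMax_eq_of_pcMax_lt {k : ℕ} (hk : R.pcMax p i < k) :
    R.mvecMax p' k = R.mvecMax p k := by
  have h' : ∀ j, j ≠ i → p j = p' j := fun j hj => (h j hj).symm
  obtain ⟨hC', hD'⟩ := max_lt_iff.mp hlt
  obtain ⟨hC, hD⟩ := max_lt_iff.mp hk
  unfold mvecMax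
  rw [card_filter_eq_eq_of_lt (pathCong_le_max h) (pathCong_le_max h') hC (hC'.trans hk),
    card_filter_eq_eq_of_lt (length_le_max h) (length_le_max h') hD (hD'.trans hk)]

theorem mvecMax_pcMax_lt : R.mvecMax p' (R.pcMax p i) < R.mvecMax p (R.pcMax p i) := by
  have h' : ∀ j, j ≠ i → p j = p' j := fun j hj => (h j hj).symm
  obtain ⟨hC', hD'⟩ := max_lt_iff.mp hlt
  unfold mvecMax
  rcases max_choice (R.pathCong p i) (p i).length with hc | hc
  · exact add_lt_add_of_lt_of_le
      (card_filter_eq_lt (pathCong_le_max h) (pathCong_le_max h') hc.symm hC')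
      (card_filter_eq_le (length_le_max h) (length_le_max h') (le_max_right _ _) hD')
  · exact add_lt_add_of_le_of_lt
      (card_filter_eq_le (pathCong_le_max h) (pathCong_le_max h') (le_max_left _ _) hC')
      (card_filter_eq_lt (length_le_max h) (length_le_max h') hc.symm hD')

end GreedyMove

theorem max_greedy_decreases_vector_general (R : RoutingGame V) (p p' : R.Routing)
    (h : R.GreedyMoveMax p p') :
    R.MLtMax p' p := by
  obtain ⟨i, q, -, rfl, hlt⟩ := h
  have hoff : ∀ j, j ≠ i → Function.update p i q j = p j :=
    fun j hj => Function.update_of_ne hj _ _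
  exact ⟨R.pcMax p i, fun _ hk => mvecMax_eq_of_pcMax_lt hoff hlt hk, mvecMax_pcMax_lt hoff hlt⟩

/-- In any max game, if a greedy move by some player takes a
routing `p` to a new routing `p'`, then `M(p') < M(p)` in the total order on
routing vectors. -/
theorem max_greedy_decreases_vector (R : RoutingGame V) (p p' : R.Routing)
    (hp : R.IsRouting p) (h : R.GreedyMoveMax p p') :
    R.MLtMax p' p :=
  max_greedy_decreases_vector_general R p p' h

end RoutingGame
end

section
/- In any max game, every sequence of routings in which each routing is obtained from the previous one by a greedy move of a single player is finite; consequently, every max game possesses at least one Nash-routing, and best-response dynamics from any initial routing reach a Nash-routing in finitely many steps. -/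
open Finset

namespace RoutingGame

variable {V : Type} [Fintype V] [DecidableEq V] (R : RoutingGame V)

/-!
With base `B = N + 2`, let `Φ(p) = ∑ᵢ (B ^ Cᵢ(p) + B ^ Dᵢ(p))`.
If player `i` moves greedily and its new cost is `c`, then its own summand drops from at least
`B ^ (c + 1)` to at most `2 B ^ c`, while the summand of any other player grows by at most
`B ^ c`: its path length is unchanged, and the only edges whose congestion rises lie on the
new path of `i`, hence have congestion at most `c`. As `(N - 1) + 2 < B`, `Φ` strictly
decreases, so greedy sequences are finite and a Nash-routing is reached from any routing.
-/

lemma pow_le_add_pow_of_le_max {B n a b : ℕ} (hB : 1 ≤ B) (h : n ≤ max a b) :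
    B ^ n ≤ B ^ a + B ^ b := by
  rcases le_max_iff.mp h with h | h
  · exact (Nat.pow_le_pow_right hB h).trans (Nat.le_add_right _ _)
  · exact (Nat.pow_le_pow_right hB h).trans (Nat.le_add_left _ _)

lemma edgeCong_le_pathCong {p : R.Routing} {j : Fin R.N} {e : Sym2 V}
    (h : e ∈ (p j).edges) : R.edgeCong p e ≤ R.pathCong p j :=
  Finset.le_sup (List.mem_toFinset.mpr h)

lemma edgeCong_update_le_of_notMem (p : R.Routing) {i : Fin R.N}
    {q : R.G.Walk (R.src i) (R.dst i)} {e : Sym2 V} (he : e ∉ q.edges) :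
    R.edgeCong (Function.update p i q) e ≤ R.edgeCong p e := by
  refine Finset.card_le_card fun j hj => ?_
  simp only [Finset.mem_filter, Finset.mem_univ, true_and] at hj ⊢
  rcases eq_or_ne j i with rfl | hji
  · rw [Function.update_self] at hj
    exact absurd hj he
  · rwa [Function.update_of_ne hji] at hj

lemma pathCong_update_le_max (p : R.Routing) {i j : Fin R.N}
    (q : R.G.Walk (R.src i) (R.dst i)) (hji : j ≠ i) :
    R.pathCong (Function.update p i q) j ≤
      max (R.pathCong p j) (R.pathCong (Function.update p i q) i) := by
  unfold pathCong
  rw [Function.update_of_ne hji]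
  refine Finset.sup_le fun e he => ?_
  rw [List.mem_toFinset] at he
  by_cases heq : e ∈ q.edges
  · refine le_max_of_le_right (R.edgeCong_le_pathCong ?_)
    rwa [Function.update_self]
  · exact le_max_of_le_left ((R.edgeCong_update_le_of_notMem p heq).trans
      (R.edgeCong_le_pathCong he))

def weight (p : R.Routing) (i : Fin R.N) : ℕ :=
  (R.N + 2) ^ R.pathCong p i + (R.N + 2) ^ (p i).length

def potential (p : R.Routing) : ℕ :=
  ∑ i, R.weight p i

lemma pow_pcMax_le_weight (p : R.Routing) (i : Fin R.N) :
    (R.N + 2) ^ R.pcMax p i ≤ R.weight p i :=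
  pow_le_add_pow_of_le_max (by omega) le_rfl

lemma weight_le_two_mul_pow_pcMax (p : R.Routing) (i : Fin R.N) :
    R.weight p i ≤ 2 * (R.N + 2) ^ R.pcMax p i := by
  have hB : 1 ≤ R.N + 2 := by omega
  rw [two_mul]
  exact add_le_add (Nat.pow_le_pow_right hB (le_max_left _ _))
    (Nat.pow_le_pow_right hB (le_max_right _ _))

lemma weight_update_le_of_ne (p : R.Routing) {i j : Fin R.N}
    (q : R.G.Walk (R.src i) (R.dst i)) (hji : j ≠ i) :
    R.weight (Function.update p i q) j ≤
      R.weight p j + (R.N + 2) ^ R.pcMax (Function.update p i q) i := by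
  have hcong : R.pathCong (Function.update p i q) j ≤
      max (R.pathCong p j) (R.pcMax (Function.update p i q) i) :=
    (R.pathCong_update_le_max p q hji).trans (max_le_max le_rfl (le_max_left _ _))
  have hpow := pow_le_add_pow_of_le_max (B := R.N + 2) (by omega) hcong
  unfold weight
  rw [Function.update_of_ne hji]
  omega

lemma potential_lt_of_greedyMoveMax {p p' : R.Routing} (h : R.GreedyMoveMax p p') :
    R.potential p' < R.potential p := by
  obtain ⟨i, q, -, rfl, hlt⟩ := h
  set p' := Function.update p i q
  set B := R.N + 2
  set K := B ^ R.pcMax p' i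
  set others := Finset.univ.erase i
  have hothers : #others < R.N := by
    simpa only [Finset.card_univ, Fintype.card_fin] using
      Finset.card_erase_lt_of_mem (Finset.mem_univ i)
  have hK : 0 < K := by positivity
  calc R.potential p'
      = ∑ j ∈ others, R.weight p' j + R.weight p' i :=
        (Finset.sum_erase_add _ _ (Finset.mem_univ i)).symm
    _ ≤ ∑ j ∈ others, (R.weight p j + K) + 2 * K :=
        add_le_add (Finset.sum_le_sum fun j hj =>
            R.weight_update_le_of_ne p q (Finset.ne_of_mem_erase hj))
          (R.weight_le_two_mul_pow_pcMax p' i)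
    _ = ∑ j ∈ others, R.weight p j + (#others + 2) * K := by
        rw [Finset.sum_add_distrib, Finset.sum_const, smul_eq_mul]
        ring
    _ < ∑ j ∈ others, R.weight p j + B ^ (R.pcMax p' i + 1) := by
        rw [pow_succ, mul_comm]
        gcongr
        omega
    _ ≤ ∑ j ∈ others, R.weight p j + R.weight p i := by
        gcongr
        exact (Nat.pow_le_pow_right (by omega) hlt).trans (R.pow_pcMax_le_weight p i)
    _ = R.potential p := Finset.sum_erase_add _ _ (Finset.mem_univ i)

lemma isRouting_update {p : R.Routing} (hp : R.IsRouting p) {i : Fin R.N}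
    {q : R.G.Walk (R.src i) (R.dst i)} (hq : q ∈ R.strat i) :
    R.IsRouting (Function.update p i q) := fun j => by
  rcases eq_or_ne j i with rfl | hji
  · rwa [Function.update_self]
  · rw [Function.update_of_ne hji]
    exact hp j

variable {R} in
lemma GreedyMoveMax.isRouting {p p' : R.Routing} (h : R.GreedyMoveMax p p')
    (hp : R.IsRouting p) : R.IsRouting p' := by
  obtain ⟨i, q, hq, rfl, -⟩ := h
  exact R.isRouting_update hp hq

lemma exists_greedyMoveMax_of_not_nashMax {p : R.Routing} (hp : R.IsRouting p)
    (h : ¬ R.NashMax p) : ∃ p', R.GreedyMoveMax p p' := by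
  simp only [NashMax, hp, true_and, not_forall, not_le] at h
  obtain ⟨i, q, hq, hlt⟩ := h
  exact ⟨_, i, q, hq, rfl, hlt⟩

theorem exists_greedy_path_to_nashMax (p : R.Routing) (hp : R.IsRouting p) :
    ∃ (T : ℕ) (f : ℕ → R.Routing), f 0 = p ∧
      (∀ t < T, R.GreedyMoveMax (f t) (f (t + 1))) ∧ R.NashMax (f T) := by
  by_cases hnash : R.NashMax p
  · exact ⟨0, fun _ => p, rfl, fun t ht => absurd ht (Nat.not_lt_zero t), hnash⟩
  obtain ⟨p', hmove⟩ := R.exists_greedyMoveMax_of_not_nashMax hp hnash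
  obtain ⟨T, f, rfl, hf, hT⟩ := exists_greedy_path_to_nashMax p' (hmove.isRouting hp)
  refine ⟨T + 1, fun t => Nat.casesOn t p f, rfl, ?_, hT⟩
  rintro (_ | t) ht
  · exact hmove
  · exact hf t (by omega)
termination_by R.potential p
decreasing_by exact R.potential_lt_of_greedyMoveMax hmove

/-- In any max game, every sequence of routings in which each
routing is obtained from the previous one by a greedy move of a single player
is finite; consequently, every max game possesses at least one Nash-routing,
and best-response dynamics from any initial routing reach a Nash-routing in
finitely many steps. -/
theorem max_game_converges (R : RoutingGame V) :
    (¬ ∃ f : ℕ → R.Routing, R.IsRouting (f 0) ∧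
        ∀ t, R.GreedyMoveMax (f t) (f (t + 1))) ∧
    (∃ p : R.Routing, R.NashMax p) ∧
    (∀ p₀ : R.Routing, R.IsRouting p₀ →
      ∃ (T : ℕ) (f : ℕ → R.Routing), f 0 = p₀ ∧
        (∀ t < T, R.GreedyMoveMax (f t) (f (t + 1))) ∧ R.NashMax (f T)) := by
  refine ⟨?_, ?_, R.exists_greedy_path_to_nashMax⟩
  · rintro ⟨f, -, hf⟩
    obtain ⟨t, ht⟩ := WellFounded.not_rel_apply_succ (r := (· < ·)) (R.potential ∘ f)
    exact ht (R.potential_lt_of_greedyMoveMax (hf t))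
  · choose p hp using R.strat_nonempty
    obtain ⟨T, f, -, -, hT⟩ := R.exists_greedy_path_to_nashMax p hp
    exact ⟨f T, hT⟩

end RoutingGame
end

section
/- In any max game, if a routing p_min satisfies M(p_min) ≤ M(p) in the total order on routing vectors for every routing p, then p_min achieves the optimal social cost: SC(p_min) ≤ SC(p) for every routing p. -/
/-!
The social cost is the largest player cost `max (C_i(p)) (D_i(p))`, so `SC(p)` is exactly the
highest index at which the routing vector `M(p)` has a nonzero entry. If some routing `p` had
`SC(p) < SC(pmin)`, then `M(p)` would vanish from index `SC(pmin)` on while `M(pmin)` does not,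
making `M(p) < M(pmin)` and contradicting the minimality of `M(pmin)`.
-/

open Finset

namespace RoutingGame

variable {V : Type} [Fintype V] [DecidableEq V] (R : RoutingGame V)

section

variable (p : R.Routing)

theorem netCong_eq_sup_pathCong : R.netCong p = univ.sup (R.pathCong p) := by
  refine le_antisymm (Finset.sup_le fun e _ => ?_)
    (Finset.sup_le fun i _ => Finset.sup_mono (subset_univ _))
  obtain he | ⟨i, hi⟩ := (univ.filter fun i => e ∈ (p i).edges).eq_empty_or_nonempty
  · simp [edgeCong, he]
  · rw [mem_filter] at hi
    exact (le_sup (List.mem_toFinset.mpr hi.2)).trans (le_sup (f := R.pathCong p) (mem_univ i))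

theorem SCMax_eq_sup_pcMax : R.SCMax p = univ.sup (R.pcMax p) := by
  rw [SCMax, netCong_eq_sup_pathCong, maxLen, ← sup_sup]
  rfl

theorem pcMax_le_SCMax (i : Fin R.N) : R.pcMax p i ≤ R.SCMax p :=
  R.SCMax_eq_sup_pcMax p ▸ le_sup (mem_univ i)

theorem exists_pcMax_eq_SCMax : ∃ i, R.pcMax p i = R.SCMax p := by
  have : Nonempty (Fin R.N) := Fin.pos_iff_nonempty.mp R.Npos
  obtain ⟨i, -, hi⟩ := exists_mem_eq_sup univ univ_nonempty (R.pcMax p)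
  exact ⟨i, by rw [SCMax_eq_sup_pcMax, hi]⟩

theorem mvecMax_pos_iff (k : ℕ) :
    0 < R.mvecMax p k ↔ ∃ i, R.pathCong p i = k ∨ (p i).length = k := by
  simp only [mvecMax, Nat.add_pos_iff_pos_or_pos, card_pos, filter_nonempty_iff, mem_univ,
    true_and, ← exists_or]

theorem mvecMax_SCMax_pos : 0 < R.mvecMax p (R.SCMax p) := by
  obtain ⟨i, hi⟩ := R.exists_pcMax_eq_SCMax p
  refine (R.mvecMax_pos_iff p _).mpr ⟨i, ?_⟩
  rw [← hi, pcMax]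
  exact (max_choice _ _).imp Eq.symm Eq.symm

theorem mvecMax_eq_zero_of_SCMax_lt {k : ℕ} (hk : R.SCMax p < k) : R.mvecMax p k = 0 := by
  by_contra hne
  obtain ⟨i, hi⟩ := (R.mvecMax_pos_iff p k).mp (Nat.pos_of_ne_zero hne)
  have hk_le : k ≤ R.pcMax p i := hi.elim (· ▸ le_max_left _ _) (· ▸ le_max_right _ _)
  exact (hk_le.trans (R.pcMax_le_SCMax p i)).not_gt hk

end

theorem max_minimum_vector_is_optimal_general (R : RoutingGame V) (pmin : R.Routing)
    (hle : ∀ p : R.Routing, R.IsRouting p →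
      R.MLtMax pmin p ∨ ∀ k, R.mvecMax pmin k = R.mvecMax p k) :
    ∀ p : R.Routing, R.IsRouting p → R.SCMax pmin ≤ R.SCMax p := by
  intro p hp
  by_contra! hlt
  have hpos := R.mvecMax_SCMax_pos pmin
  have hzero : ∀ k, R.SCMax pmin ≤ k → R.mvecMax p k = 0 := fun k hk =>
    R.mvecMax_eq_zero_of_SCMax_lt p (hlt.trans_le hk)
  rcases hle p hp with ⟨j, hagree, hj⟩ | heq
  · rcases lt_or_ge j (R.SCMax pmin) with hjs | hjs
    · have := hagree _ hjs
      have := hzero _ le_rfl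
      omega
    · have := hzero j hjs
      omega
  · have := heq (R.SCMax pmin)
    have := hzero _ le_rfl
    omega

/-- In any max game, if a routing `pmin` satisfies
`M(pmin) ≤ M(p)` for every routing `p`, then `pmin` achieves the optimal social
cost: `SC(pmin) ≤ SC(p)` for every routing `p`. -/
theorem max_minimum_vector_is_optimal (R : RoutingGame V) (pmin : R.Routing)
    (hmin : R.IsRouting pmin)
    (hle : ∀ p : R.Routing, R.IsRouting p →
      R.MLtMax pmin p ∨ ∀ k, R.mvecMax pmin k = R.mvecMax p k) :
    ∀ p : R.Routing, R.IsRouting p → R.SCMax pmin ≤ R.SCMax p :=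
  max_minimum_vector_is_optimal_general R pmin hle

end RoutingGame
end

section
/- Let p be a Nash-routing of a max game on a graph with n ≥ 2 vertices, let p* be any routing, and suppose C(p) ≥ D(p) + 2⌈log₂ n⌉ + 2. Let Z be the set of edges e with C_e(p) ≥ C(p) − 2⌈log₂ n⌉. Then there exists a nonempty set of edges X ⊆ Z such that |f(X)| ≤ 2|X|. -/
/-
Suppose every nonempty set `X` of high-congestion edges expands, `|f(X)| > 2|X|`. Starting from
an edge of maximal congestion, repeatedly adjoin `f(X)`: each step more than doubles the set, and
since the edges of `f(e)` have congestion at least `C_e(p) - 1`, after `k` steps every edge of the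
set still has congestion at least `C(p) - k`. After `2⌈log₂ n⌉ + 1` steps the set would have at
least `2n²` edges, more than the `|Sym2 V| ≤ n²` there are.
-/

open Finset

namespace RoutingGame

variable {V : Type} [Fintype V] [DecidableEq V] (R : RoutingGame V)

/-- `f(e) = ⋃_{i ∈ Π_e(p)} f(e,i)` where `f(e,i)` is the set of edges
`e' ∈ p*_i` with `C_{e'}(p) ≥ C_e(p) − 1`. -/
def fMax (p pstar : R.Routing) (e : Sym2 V) : Finset (Sym2 V) :=
  Finset.univ.filter fun e' => ∃ i : Fin R.N,
    e ∈ (p i).edges ∧ e' ∈ (pstar i).edges ∧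
      R.edgeCong p e ≤ R.edgeCong p e' + 1

/-- `f(X) = ⋃_{e ∈ X} f(e)`. -/
def fMaxSet (p pstar : R.Routing) (X : Finset (Sym2 V)) : Finset (Sym2 V) :=
  X.biUnion (R.fMax p pstar)

end RoutingGame

namespace Finset

variable {α : Type*} [DecidableEq α] (c : α → ℕ) (f : α → Finset α) (b : ℕ)

theorem exists_pow_le_card_of_expanding (hf : ∀ e, ∀ e' ∈ f e, c e ≤ c e' + 1) (e₀ : α) (K : ℕ)
    (hexp : ∀ X : Finset α, X.Nonempty → (∀ e ∈ X, c e₀ ≤ c e + K) →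
      b * X.card < (X.biUnion f).card) :
    ∀ k ≤ K + 1, ∃ X : Finset α, X.Nonempty ∧ (∀ e ∈ X, c e₀ ≤ c e + k) ∧ b ^ k ≤ X.card := by
  intro k
  induction k with
  | zero => exact fun _ => ⟨{e₀}, singleton_nonempty _, by simp, by simp⟩
  | succ k ih =>
    intro hk
    obtain ⟨X, hne, hlevel, hcard⟩ := ih (by omega)
    have hgrow := hexp X hne fun e he => (hlevel e he).trans (by omega)
    refine ⟨X ∪ X.biUnion f, hne.mono subset_union_left, ?_, ?_⟩
    · intro e he
      rcases mem_union.mp he with he | he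
      · exact (hlevel e he).trans (by omega)
      · obtain ⟨e₁, he₁, he⟩ := mem_biUnion.mp he
        have := hf e₁ e he
        have := hlevel e₁ he₁
        omega
    · calc b ^ (k + 1) = b * b ^ k := pow_succ' b k
        _ ≤ b * X.card := Nat.mul_le_mul_left b hcard
        _ ≤ (X.biUnion f).card := hgrow.le
        _ ≤ (X ∪ X.biUnion f).card := card_le_card subset_union_right

theorem exists_card_biUnion_le_mul [Fintype α] (hf : ∀ e, ∀ e' ∈ f e, c e ≤ c e' + 1)
    (e₀ : α) (K : ℕ) (hK : Fintype.card α < b ^ (K + 1)) :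
    ∃ X : Finset α, X.Nonempty ∧ (∀ e ∈ X, c e₀ ≤ c e + K) ∧ (X.biUnion f).card ≤ b * X.card := by
  by_contra! hexp
  obtain ⟨X, -, -, hcard⟩ := exists_pow_le_card_of_expanding c f b hf e₀ K hexp (K + 1) le_rfl
  exact (hcard.trans (card_le_univ X)).not_gt hK

end Finset

theorem Sym2.card_lt_two_pow_two_mul_clog_add_one {α : Type*} [Fintype α] :
    Fintype.card (Sym2 α) < 2 ^ (2 * Nat.clog 2 (Fintype.card α) + 1) :=
  calc Fintype.card (Sym2 α) ≤ Fintype.card (α × α) :=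
        Fintype.card_le_of_surjective _ Sym2.mk_surjective
    _ = Fintype.card α * Fintype.card α := Fintype.card_prod α α
    _ ≤ 2 ^ Nat.clog 2 (Fintype.card α) * 2 ^ Nat.clog 2 (Fintype.card α) :=
        Nat.mul_le_mul (Nat.le_pow_clog one_lt_two _) (Nat.le_pow_clog one_lt_two _)
    _ < 2 ^ (2 * Nat.clog 2 (Fintype.card α) + 1) := by
        rw [← pow_add, ← two_mul]; exact Nat.pow_lt_pow_succ one_lt_two

namespace RoutingGame

variable {V : Type} [Fintype V] [DecidableEq V] (R : RoutingGame V)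

theorem exists_edgeCong_eq_netCong (p : R.Routing) : ∃ e, R.edgeCong p e = R.netCong p := by
  have : Nonempty (Sym2 V) := ⟨s(R.src ⟨0, R.Npos⟩, R.dst ⟨0, R.Npos⟩)⟩
  obtain ⟨e, -, he⟩ := exists_mem_eq_sup univ univ_nonempty (R.edgeCong p)
  exact ⟨e, he.symm⟩

theorem edgeCong_le_edgeCong_add_one_of_mem_fMax {p pstar : R.Routing} {e e' : Sym2 V}
    (h : e' ∈ R.fMax p pstar e) : R.edgeCong p e ≤ R.edgeCong p e' + 1 := by
  obtain ⟨-, -, -, -, hcong⟩ := mem_filter.mp h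
  exact hcong

theorem max_expansion_general (R : RoutingGame V) (p pstar : R.Routing) :
    ∃ X : Finset (Sym2 V), X.Nonempty ∧
      (∀ e ∈ X, R.netCong p ≤ R.edgeCong p e + 2 * Nat.clog 2 (Fintype.card V)) ∧
      (R.fMaxSet p pstar X).card ≤ 2 * X.card := by
  obtain ⟨e₀, he₀⟩ := R.exists_edgeCong_eq_netCong p
  rw [← he₀]
  exact exists_card_biUnion_le_mul (R.edgeCong p) (R.fMax p pstar) 2
    (fun _ _ => R.edgeCong_le_edgeCong_add_one_of_mem_fMax) e₀ _
    Sym2.card_lt_two_pow_two_mul_clog_add_one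

/-- Let `p` be a Nash-routing of a max game on a graph with
`n ≥ 2` vertices, let `p*` be any routing, and suppose
`C(p) ≥ D(p) + 2⌈log₂ n⌉ + 2`.  Let `Z` be the set of edges `e` with
`C_e(p) ≥ C(p) − 2⌈log₂ n⌉`.  Then there exists a nonempty set of edges
`X ⊆ Z` such that `|f(X)| ≤ 2|X|`. -/
theorem max_expansion (R : RoutingGame V) (p pstar : R.Routing)
    (hp : R.NashMax p) (hstar : R.IsRouting pstar)
    (hn : 2 ≤ Fintype.card V)
    (hC : R.maxLen p + 2 * Nat.clog 2 (Fintype.card V) + 2 ≤ R.netCong p) :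
    ∃ X : Finset (Sym2 V), X.Nonempty ∧
      (∀ e ∈ X, R.netCong p ≤ R.edgeCong p e + 2 * Nat.clog 2 (Fintype.card V)) ∧
      (R.fMaxSet p pstar X).card ≤ 2 * X.card :=
  max_expansion_general R p pstar

end RoutingGame
end

section
/- In any sum-bucket game, if a greedy move by some player takes a routing p to a new routing p', then M(p') < M(p) in the total order on routing vectors, where for r = N + 2L − 1 the routing vector of a routing p is M(p) = [m_1(p),…,m_r(p)] with m_j(p) equal to the number of players whose cost pc_i(p) equals j, and M(p') < M(p) iff there is an index j with m_k(p') = m_k(p) for all k > j and m_j(p') < m_j(p). -/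
/-! When player `i` switches to `q`, congestion grows only in the bucket of `q` and only on the
edges of `q`, so any other player whose cost rises shares a bucket and an edge with `q` and ends
with cost at most the mover's new cost `c' < c := pc_i(p)`. Applying this also to the reverse
move, every other player whose cost changes starts at cost at most `c` and ends below `c`. Hence
the counts above `c` are unchanged, while the count at `c` drops because the mover leaves it. -/

open Finset

namespace RoutingGame

variable {V : Type} [Fintype V] [DecidableEq V] (R : RoutingGame V)

/-- Player cost in the sum game: `pc_i(p) = C_i(p) + D_i(p)`. -/
def pcSum (p : R.Routing) (i : Fin R.N) : ℕ :=
  R.pathCong p i + (p i).length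

/-- For a bucket index `b`, the number of players whose path uses edge `e`
and belongs to bucket `b` (the bucket of a path `q` is `⌊log₂ |q|⌋`). -/
def nCongB (p : R.Routing) (b : ℕ) (e : Sym2 V) : ℕ :=
  (Finset.univ.filter fun j => e ∈ (p j).edges ∧ Nat.log 2 (p j).length = b).card

/-- The normalized congestion `C̄_i(p)` of player `i`: the maximum, over the
edges of `p_i`, of the congestion caused by paths in the bucket of `p_i`. -/
def nCong (p : R.Routing) (i : Fin R.N) : ℕ :=
  (p i).edges.toFinset.sup (R.nCongB p (Nat.log 2 (p i).length))

/-- The normalized length `D̄_i(p) = 2 ^ (B(p_i) + 1) - 1` of player `i`. -/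
def nLen (p : R.Routing) (i : Fin R.N) : ℕ :=
  2 ^ (Nat.log 2 (p i).length + 1) - 1

/-- Player cost in the sum-bucket game: `pc_i(p) = C̄_i(p) + D̄_i(p)`. -/
def pcSB (p : R.Routing) (i : Fin R.N) : ℕ := R.nCong p i + R.nLen p i

/-- The normalized congestion `C̄(p)` of a routing. -/
def nC (p : R.Routing) : ℕ := Finset.univ.sup (R.nCong p)

/-- The normalized length `D̄(p)` of a routing. -/
def nD (p : R.Routing) : ℕ := Finset.univ.sup (R.nLen p)

/-- The normalized edge congestion `C̄_e(p) = max_i C̄_{e,p_i}(p)`. -/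
def nCe (p : R.Routing) (e : Sym2 V) : ℕ :=
  Finset.univ.sup fun i => R.nCongB p (Nat.log 2 (p i).length) e

/-- Social cost in the sum-bucket game: `SC(p) = C̄(p) + D̄(p)`. -/
def SCSB (p : R.Routing) : ℕ := R.nC p + R.nD p

/-- A Nash-routing of the sum-bucket game: a routing in which every player is
locally optimal. -/
def NashSB (p : R.Routing) : Prop :=
  R.IsRouting p ∧
    ∀ i, ∀ q ∈ R.strat i, R.pcSB p i ≤ R.pcSB (Function.update p i q) i

/-- A greedy move in the sum-bucket game takes `p` to `p'` by letting a single
player switch to a strictly cheaper path in its strategy set. -/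
def GreedyMoveSB (p p' : R.Routing) : Prop :=
  ∃ i, ∃ q ∈ R.strat i,
    p' = Function.update p i q ∧ R.pcSB p' i < R.pcSB p i

/-- The entry `m_j(p)` of the routing vector of the sum-bucket game: the number
of players whose cost equals `j`. -/
def mvecSB (p : R.Routing) (j : ℕ) : ℕ :=
  (Finset.univ.filter fun i => R.pcSB p i = j).card

/-- The strict order on routing vectors (sum-bucket game): `M(p') < M(p)` iff
the vectors agree above some index `j` and the entry of `p'` at `j` is smaller. -/
def MLtSB (p' p : R.Routing) : Prop :=
  ∃ j : ℕ, (∀ k, j < k → R.mvecSB p' k = R.mvecSB p k) ∧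
    R.mvecSB p' j < R.mvecSB p j

end RoutingGame

theorem Finset.exists_card_filter_eq_lt_of_le_max {ι : Type*} [Fintype ι] (f g : ι → ℕ) (i : ι)
    (hi : g i < f i) (hg : ∀ j ≠ i, g j ≤ max (f j) (g i))
    (hf : ∀ j ≠ i, f j ≤ max (g j) (f i)) :
    ∃ c, (∀ k, c < k → #{j | g j = k} = #{j | f j = k}) ∧ #{j | g j = c} < #{j | f j = c} := by
  refine ⟨f i, fun k hk => congrArg card (filter_congr fun j _ => ?_), card_lt_card ?_⟩
  · by_cases hj : j = i
    · subst hj; omega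
    · have := hg j hj; have := hf j hj; omega
  · refine (ssubset_iff_of_subset fun j hj => ?_).2
      ⟨i, by simp, by simp only [mem_filter, mem_univ, true_and]; omega⟩
    simp only [mem_filter, mem_univ, true_and] at hj ⊢
    have hji : j ≠ i := by rintro rfl; omega
    have := hg j hji; have := hf j hji; omega

namespace RoutingGame

variable {V : Type} [Fintype V] [DecidableEq V] (R : RoutingGame V)

lemma nCongB_update_le (p : R.Routing) (i : Fin R.N) (q : R.G.Walk (R.src i) (R.dst i))
    (b : ℕ) (e : Sym2 V) (h : ¬(e ∈ q.edges ∧ Nat.log 2 q.length = b)) :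
    R.nCongB (Function.update p i q) b e ≤ R.nCongB p b e := by
  refine card_le_card fun j hj => ?_
  simp only [mem_filter, mem_univ, true_and] at hj ⊢
  by_cases hji : j = i
  · subst hji
    rw [Function.update_self] at hj
    exact absurd hj h
  · rwa [Function.update_of_ne hji] at hj

lemma nCong_update_le_of_log_ne (p : R.Routing) (i : Fin R.N)
    (q : R.G.Walk (R.src i) (R.dst i)) {j : Fin R.N} (hj : j ≠ i)
    (hb : Nat.log 2 q.length ≠ Nat.log 2 (p j).length) :
    R.nCong (Function.update p i q) j ≤ R.nCong p j := by
  rw [nCong, nCong, Function.update_of_ne hj]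
  exact sup_mono_fun fun e _ => R.nCongB_update_le p i q _ e fun h => hb h.2

lemma nCong_update_le_max (p : R.Routing) (i : Fin R.N)
    (q : R.G.Walk (R.src i) (R.dst i)) {j : Fin R.N} (hj : j ≠ i) :
    R.nCong (Function.update p i q) j ≤
      max (R.nCong p j) (R.nCong (Function.update p i q) i) := by
  rw [nCong, nCong, nCong, Function.update_of_ne hj, Function.update_self]
  refine Finset.sup_le fun e he => ?_
  by_cases hq : e ∈ q.edges ∧ Nat.log 2 q.length = Nat.log 2 (p j).length
  · rw [← hq.2]
    exact le_max_of_le_right (le_sup (List.mem_toFinset.mpr hq.1))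
  · exact le_max_of_le_left ((R.nCongB_update_le p i q _ e hq).trans (le_sup he))

lemma pcSB_update_le (p : R.Routing) (i : Fin R.N) (q : R.G.Walk (R.src i) (R.dst i))
    {j : Fin R.N} (hj : j ≠ i) :
    R.pcSB (Function.update p i q) j ≤
      max (R.pcSB p j) (R.pcSB (Function.update p i q) i) := by
  have hlen : R.nLen (Function.update p i q) j = R.nLen p j := by
    rw [nLen, nLen, Function.update_of_ne hj]
  by_cases hb : Nat.log 2 q.length = Nat.log 2 (p j).length
  · have hlen_i : R.nLen (Function.update p i q) i = R.nLen p j := by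
      rw [nLen, nLen, Function.update_self, hb]
    rw [pcSB, pcSB, pcSB, hlen, hlen_i, max_add_add_right]
    exact Nat.add_le_add_right (R.nCong_update_le_max p i q hj) _
  · rw [pcSB, pcSB, hlen]
    exact le_max_of_le_left (Nat.add_le_add_right (R.nCong_update_le_of_log_ne p i q hj hb) _)

theorem sum_bucket_greedy_decreases_vector_general (R : RoutingGame V)
    (p p' : R.Routing) (h : R.GreedyMoveSB p p') :
    R.MLtSB p' p := by
  obtain ⟨i, q, -, rfl, hlt⟩ := h
  have hback : Function.update (Function.update p i q) i (p i) = p := by simp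
  refine Finset.exists_card_filter_eq_lt_of_le_max _ _ i hlt
    (fun j hj => R.pcSB_update_le p i q hj) (fun j hj => ?_)
  simpa only [hback] using R.pcSB_update_le (Function.update p i q) i (p i) hj

/-- In any sum-bucket game, if a greedy move by some player takes
a routing `p` to a new routing `p'`, then `M(p') < M(p)` in the total order on
routing vectors, where `m_j(p)` is the number of players whose cost `pc_i(p)`
equals `j`. -/
theorem sum_bucket_greedy_decreases_vector (R : RoutingGame V)
    (p p' : R.Routing) (hp : R.IsRouting p) (h : R.GreedyMoveSB p p') :
    R.MLtSB p' p :=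
  sum_bucket_greedy_decreases_vector_general R p p' h

end RoutingGame
end
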